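/- Fix positive integers N and U, and let K = ⌈U/N⌉. Define f₁(x) = (ReLU(x - jN))_{j=0}^{K}, f₂(v) = (ReLU(v_j - v_{j+1}))_{j=0}^{K-1}, f₃(w) = interleaving each w_j with its indicator I_N(w_j), f₄ mapping each pair (w_j, b_j) to ReLU(w_j - N·b_j), and f₅(u) = ReLU(Σ_j u_j), where I_N is the ReLU indicator of the integer N. Then for every integer x with 0 ≤ x ≤ U, the composition satisfies f₅(f₄(f₃(f₂(f₁(x))))) = x mod N. -/
import Mathlib


noncomputable def relu (t : ℝ) : ℝ := max t 0

noncomputable def Igt (i : ℤ) (x : ℝ) : ℝ :=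
  relu (relu (x - i) - relu (x - i - 1))

noncomputable def Iid (N : ℤ) (x : ℝ) : ℝ :=
  relu (Igt (N - 1) x - Igt N x)

lemma relu_of_nonneg {t : ℝ} (h : 0 ≤ t) : relu t = t := max_eq_left h

lemma relu_of_nonpos {t : ℝ} (h : t ≤ 0) : relu t = 0 := max_eq_right h

lemma Iid_self (N : ℤ) (hN : 0 < N) : Iid N (N : ℝ) = 1 := by
  have hN' : (1:ℝ) ≤ N := by exact_mod_cast hN
  unfold Iid Igt
  push_cast
  ring_nf
  norm_num [relu]

lemma Iid_small (N m : ℤ) (hN : 0 < N) (h0 : 0 ≤ m) (h1 : m < N) : Iid N (m : ℝ) = 0 := by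
  have hm : (m:ℝ) ≤ (N:ℝ) - 1 := by
    have : m ≤ N - 1 := by omega
    exact_mod_cast this
  unfold Iid Igt
  push_cast
  rw [relu_of_nonpos (by linarith : (m:ℝ) - ((N:ℝ) - 1) ≤ 0),
      relu_of_nonpos (by linarith : (m:ℝ) - ((N:ℝ) - 1) - 1 ≤ 0),
      relu_of_nonpos (by linarith : (m:ℝ) - (N:ℝ) ≤ 0),
      relu_of_nonpos (by linarith : (m:ℝ) - (N:ℝ) - 1 ≤ 0)]
  norm_num [relu]

lemma key_val (N x j : ℤ) (hN : 0 < N) (hx : 0 ≤ x) :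
    relu (relu (relu ((x:ℝ) - (j:ℝ) * N) - relu ((x:ℝ) - ((j:ℝ) + 1) * N))
      - N * Iid N (relu (relu ((x:ℝ) - (j:ℝ) * N) - relu ((x:ℝ) - ((j:ℝ) + 1) * N)))) =
    if j = x / N then ((x % N : ℤ) : ℝ) else 0 := by
  set q : ℤ := x / N with hq
  set r : ℤ := x % N with hr
  have hxeq : N * q + r = x := Int.mul_ediv_add_emod x N
  have hr0 : 0 ≤ r := Int.emod_nonneg x (by omega)
  have hrN : r < N := Int.emod_lt_of_pos x hN
  have hNR : (0:ℝ) < N := by exact_mod_cast hN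
  have hrR0 : (0:ℝ) ≤ (r:ℝ) := by exact_mod_cast hr0
  have hrRN : (r:ℝ) < (N:ℝ) := by exact_mod_cast hrN
  rcases lt_trichotomy j q with h | h | h
  · -- j < q : w = N, u = 0
    have hA : (N:ℝ) ≤ (x:ℝ) - (j:ℝ) * N := by
      have : N ≤ x - j * N := by nlinarith [hxeq, hr0, (by omega : j + 1 ≤ q)]
      calc (N:ℝ) ≤ ((x - j*N : ℤ):ℝ) := by exact_mod_cast this
        _ = (x:ℝ) - (j:ℝ) * N := by push_cast; ring
    have hB : (0:ℝ) ≤ (x:ℝ) - ((j:ℝ) + 1) * N := by linarith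
    rw [relu_of_nonneg (by linarith : (0:ℝ) ≤ (x:ℝ) - (j:ℝ) * N),
        relu_of_nonneg hB]
    have hdiff : (x:ℝ) - (j:ℝ) * N - ((x:ℝ) - ((j:ℝ) + 1) * N) = (N:ℝ) := by ring
    rw [hdiff, relu_of_nonneg hNR.le, Iid_self N hN]
    rw [if_neg (by omega)]
    rw [show (N:ℝ) - (N:ℝ) * 1 = 0 by ring, relu_of_nonpos (le_refl 0)]
  · -- j = q : w = r, u = r
    rw [h]
    have hA : (x:ℝ) - (q:ℝ) * N = (r:ℝ) := by
      have h1 : x - q * N = r := by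
        have := hxeq; nlinarith [hxeq]
      calc (x:ℝ) - (q:ℝ) * N = ((x - q*N : ℤ):ℝ) := by push_cast; ring
        _ = (r:ℝ) := by exact_mod_cast h1
    have hB : (x:ℝ) - ((q:ℝ) + 1) * N = (r:ℝ) - N := by
      rw [show (x:ℝ) - ((q:ℝ) + 1) * N = (x:ℝ) - (q:ℝ)*N - N by ring, hA]
    rw [hA, hB, relu_of_nonpos (show (r:ℝ) - N ≤ 0 by linarith), sub_zero,
        relu_of_nonneg hrR0, relu_of_nonneg hrR0, Iid_small N r hN hr0 hrN,
        mul_zero, sub_zero, relu_of_nonneg hrR0, if_pos rfl]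
  · -- j > q : w = 0, u = 0
    have hA : (x:ℝ) - (j:ℝ) * N ≤ 0 := by
      have : x - j * N ≤ r - N := by nlinarith [hxeq, (by omega : q + 1 ≤ j)]
      have h2 : (x:ℝ) - (j:ℝ) * N ≤ (r:ℝ) - N := by
        calc (x:ℝ) - (j:ℝ) * N = ((x - j*N : ℤ):ℝ) := by push_cast; ring
          _ ≤ ((r - N : ℤ):ℝ) := by exact_mod_cast this
          _ = (r:ℝ) - N := by push_cast; ring
      linarith
    have hB : (x:ℝ) - ((j:ℝ) + 1) * N ≤ 0 := by linarith
    rw [relu_of_nonpos hA, relu_of_nonpos hB, sub_zero, relu_of_nonpos (le_refl 0)]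
    have h0 : Iid N ((0:ℝ)) = 0 := by
      have := Iid_small N 0 hN (le_refl 0) hN
      simpa using this
    rw [h0, mul_zero, sub_zero, relu_of_nonpos (le_refl 0), if_neg (by omega)]

theorem stmt_7 (N U : ℤ) (hN : 0 < N) (hU : 0 < U)
    (K : ℕ) (hK : (K : ℤ) = ⌈(U : ℚ) / N⌉)
    (f1 : ℝ → Fin (K + 1) → ℝ)
    (hf1 : ∀ x j, f1 x j = relu (x - j * N))
    (f2 : (Fin (K + 1) → ℝ) → Fin K → ℝ)
    (hf2 : ∀ v j, f2 v j = relu (v j.castSucc - v j.succ))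
    (f3 : (Fin K → ℝ) → Fin K → ℝ × ℝ)
    (hf3 : ∀ w j, f3 w j = (w j, Iid N (w j)))
    (f4 : (Fin K → ℝ × ℝ) → Fin K → ℝ)
    (hf4 : ∀ p j, f4 p j = relu ((p j).1 - N * (p j).2))
    (f5 : (Fin K → ℝ) → ℝ)
    (hf5 : ∀ u, f5 u = relu (∑ j, u j)) :
    ∀ x : ℤ, 0 ≤ x → x ≤ U →
      f5 (f4 (f3 (f2 (f1 (x : ℝ))))) = ((x % N : ℤ) : ℝ) := by
  intro x hx0 hxU
  have hterm : ∀ j : Fin K, f4 (f3 (f2 (f1 (x:ℝ)))) j =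
      if (j : ℤ) = x / N then ((x % N : ℤ) : ℝ) else 0 := by
    intro j
    rw [hf4, hf3, hf2, hf1, hf1]
    have hc : ((j.castSucc : Fin (K+1)) : ℝ) = (j : ℕ) := by
      simp
    have hs : ((j.succ : Fin (K+1)) : ℝ) = (j : ℕ) + 1 := by
      simp
    rw [hc, hs]
    have := key_val N x (j : ℕ) hN hx0
    push_cast at this ⊢
    convert this using 3
  rw [hf5]
  have hsum : ∑ j, f4 (f3 (f2 (f1 (x:ℝ)))) j =
      ∑ j : Fin K, (if (j : ℤ) = x / N then ((x % N : ℤ) : ℝ) else 0) :=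
    Finset.sum_congr rfl (fun j _ => hterm j)
  rw [hsum]
  -- U ≤ K * N
  have hUle : U ≤ K * N := by
    have h1 : (U:ℚ) / N ≤ (K:ℤ) := by rw [hK]; exact Int.le_ceil _
    have hNQ : (0:ℚ) < N := by exact_mod_cast hN
    have h2 : (U:ℚ) ≤ (K:ℤ) * N := by
      rw [div_le_iff₀ hNQ] at h1; exact_mod_cast h1
    exact_mod_cast h2
  set q : ℤ := x / N with hq
  have hq0 : 0 ≤ q := Int.ediv_nonneg hx0 hN.le
  by_cases hqK : q < K
  · -- sum picks out j = q
    have hqn : (q.toNat : ℤ) = q := Int.toNat_of_nonneg hq0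
    set j0 : Fin K := ⟨q.toNat, by omega⟩ with hj0
    have : ∀ j : Fin K, ((j : ℤ) = q) ↔ (j = j0) := by
      intro j
      constructor
      · intro h
        apply Fin.ext
        show (j : ℕ) = q.toNat
        omega
      · intro h
        subst h
        show ((q.toNat : ℕ) : ℤ) = q
        exact hqn
    have hs2 : ∑ j : Fin K, (if (j : ℤ) = q then ((x % N : ℤ) : ℝ) else 0) =
        ∑ j : Fin K, (if j = j0 then ((x % N : ℤ) : ℝ) else 0) :=
      Finset.sum_congr rfl (fun j _ => if_congr (this j) rfl rfl)
    rw [hs2]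
    rw [Finset.sum_ite_eq' Finset.univ j0 (fun _ => ((x % N : ℤ) : ℝ))]
    simp only [Finset.mem_univ, if_true]
    rw [relu_of_nonneg]
    exact_mod_cast Int.emod_nonneg x (by omega)
  · -- q ≥ K : all terms 0, and x % N = 0
    have hall : ∀ j : Fin K, (if (j : ℤ) = q then ((x % N : ℤ) : ℝ) else 0) = 0 := by
      intro j
      rw [if_neg]
      have : (j : ℕ) < K := j.isLt
      omega
    have hs2 : ∑ j : Fin K, (if (j : ℤ) = q then ((x % N : ℤ) : ℝ) else 0) = 0 := by
      rw [Finset.sum_congr rfl (fun j _ => hall j), Finset.sum_const_zero]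
    rw [hs2, relu_of_nonpos (le_refl 0)]
    have hmod : x % N = 0 := by
      have h1 : N * q + x % N = x := Int.mul_ediv_add_emod x N
      have h2 : 0 ≤ x % N := Int.emod_nonneg x (by omega)
      have h3 : (K:ℤ) ≤ q := by omega
      nlinarith
    rw [hmod]; norm_num
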